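/- Fix an integer N ≥ 3, set θ_i = 2πi/N for i = 0, …, N−1, and suppose δ > 0 satisfies δ · ∑_{i=1}^{N−1} sin²θ_i < 1. Let V₀ > 0 and V_i = 0 for i ≠ 0, and let r : [0, ∞) → ℝ^N be a differentiable solution of the N-dimensional ring system. Then for every j ∈ {1, …, N−1}, the difference r_j(t) − r_{N−j}(t) converges to 0 as t → ∞; that is, the solution becomes asymptotically symmetric about the stimulated direction θ₀ = 0. -/

import Mathlib

/-!
The reflection `i ↦ -i` of the ring fixes the stimulus and the cosines `cos θᵢ` and flips the
sines, so mirror neurons `i` and `-i` receive inputs differing by exactly `2 δ sin θᵢ · m_y`,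
where `m_y = ∑ sin θⱼ rⱼ`. Pairing mirror neurons, `m_y' = -m_y + G` with
`|G| ≤ δ ∑ sin² θᵢ · |m_y|`, so `m_y` decays exponentially by Grönwall. The asymmetry
`d = rⱼ - r_{-j}` then solves `d' = -d + g` with `|g| ≤ 2 δ |m_y| → 0`, which forces
`d → 0`.
-/

open Filter Real Topology

section LinearDecay

variable {E : Type*} [NormedAddCommGroup E] [NormedSpace ℝ E] {f g : ℝ → E}

theorem hasDerivAt_exp_smul_of_neg_add {t : ℝ} (hf : HasDerivAt f (-f t + g t) t) :
    HasDerivAt (fun u => exp u • f u) (exp t • g t) t := by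
  refine ((hasDerivAt_exp t).fun_smul hf).congr_deriv ?_
  rw [smul_add, smul_neg]
  abel

theorem norm_le_exp_mul_of_hasDerivAt_neg_add {K : ℝ}
    (hf : ∀ t ≥ 0, HasDerivAt f (-f t + g t) t) (hg : ∀ t ≥ 0, ‖g t‖ ≤ K * ‖f t‖)
    {t : ℝ} (ht : 0 ≤ t) : ‖f t‖ ≤ ‖f 0‖ * exp ((K - 1) * t) := by
  have hderiv : ∀ u ≥ 0, HasDerivAt (fun u => exp u • f u) (exp u • g u) u :=
    fun u hu => hasDerivAt_exp_smul_of_neg_add (hf u hu)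
  have hbound := norm_le_gronwallBound_of_norm_deriv_right_le (δ := ‖f 0‖) (ε := 0)
    (fun u hu => (hderiv u hu.1).continuousAt.continuousWithinAt)
    (fun u hu => (hderiv u hu.1).hasDerivWithinAt) (by simp)
    (fun u hu => by
      rw [norm_smul, norm_smul, norm_of_nonneg (exp_pos u).le, add_zero, mul_left_comm]
      exact mul_le_mul_of_nonneg_left (hg u hu.1) (exp_pos u).le)
    t (Set.right_mem_Icc.2 ht)
  rw [gronwallBound_ε0, sub_zero, norm_smul, norm_of_nonneg (exp_pos t).le] at hbound
  refine le_of_mul_le_mul_left ?_ (exp_pos t)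
  calc exp t * ‖f t‖ ≤ ‖f 0‖ * exp (K * t) := hbound
    _ = exp t * (‖f 0‖ * exp ((K - 1) * t)) := by
      rw [mul_left_comm, ← exp_add]; ring_nf

theorem tendsto_zero_of_hasDerivAt_neg_add_of_norm_le {K : ℝ} (hK : K < 1)
    (hf : ∀ t ≥ 0, HasDerivAt f (-f t + g t) t) (hg : ∀ t ≥ 0, ‖g t‖ ≤ K * ‖f t‖) :
    Tendsto f atTop (𝓝 0) := by
  have hexp : Tendsto (fun t => ‖f 0‖ * exp ((K - 1) * t)) atTop (𝓝 0) := by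
    simpa [sub_eq_add_neg] using (tendsto_exp_atBot.comp
      ((tendsto_const_mul_atBot_of_neg (by linarith)).2 tendsto_id)).const_mul ‖f 0‖
  refine squeeze_zero_norm' ?_ hexp
  filter_upwards [eventually_ge_atTop 0] with t ht
  exact norm_le_exp_mul_of_hasDerivAt_neg_add hf hg ht

theorem norm_le_exp_mul_add_of_hasDerivAt_neg_add {T ε : ℝ}
    (hf : ∀ t ≥ T, HasDerivAt f (-f t + g t) t) (hg : ∀ t ≥ T, ‖g t‖ ≤ ε) {t : ℝ}
    (ht : T ≤ t) : ‖f t‖ ≤ exp (T - t) * ‖f T‖ + ε := by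
  have hderiv : ∀ u ≥ T, HasDerivAt (fun u => exp u • f u) (exp u • g u) u :=
    fun u hu => hasDerivAt_exp_smul_of_neg_add (hf u hu)
  have hbound := image_norm_le_of_norm_deriv_right_le_deriv_boundary
    (fun u hu => (hderiv u hu.1).continuousAt.continuousWithinAt)
    (fun u hu => (hderiv u hu.1).hasDerivWithinAt)
    (B := fun u => exp T * ‖f T‖ + ε * (exp u - exp T)) (B' := fun u => ε * exp u)
    (by simp [norm_smul])
    (fun u => (((hasDerivAt_exp u).sub_const (exp T)).const_mul ε).const_add (exp T * ‖f T‖))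
    (fun u hu => by
      rw [norm_smul, norm_of_nonneg (exp_pos u).le, mul_comm]
      exact mul_le_mul_of_nonneg_right (hg u hu.1) (exp_pos u).le)
    (Set.right_mem_Icc.2 ht)
  rw [norm_smul, norm_of_nonneg (exp_pos t).le] at hbound
  have hε : 0 ≤ ε := (norm_nonneg _).trans (hg T le_rfl)
  refine le_of_mul_le_mul_left ?_ (exp_pos t)
  calc exp t * ‖f t‖ ≤ exp T * ‖f T‖ + ε * (exp t - exp T) := hbound
    _ ≤ exp (t + (T - t)) * ‖f T‖ + exp t * ε := by
      rw [add_sub_cancel]; nlinarith [mul_nonneg hε (exp_pos T).le]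
    _ = exp t * (exp (T - t) * ‖f T‖ + ε) := by rw [exp_add]; ring

theorem tendsto_zero_of_hasDerivAt_neg_add (hf : ∀ᶠ t in atTop, HasDerivAt f (-f t + g t) t)
    (hg : Tendsto g atTop (𝓝 0)) : Tendsto f atTop (𝓝 0) := by
  rw [Metric.tendsto_atTop]
  intro ε hε
  have hg_small : ∀ᶠ t in atTop, ‖g t‖ ≤ ε / 2 :=
    (tendsto_zero_iff_norm_tendsto_zero.1 hg).eventually (ge_mem_nhds (half_pos hε))
  obtain ⟨T, hT⟩ := eventually_atTop.1 (hf.and hg_small)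
  have hdecay : Tendsto (fun t => exp (T - t) * ‖f T‖) atTop (𝓝 0) := by
    simpa [sub_eq_add_neg] using (tendsto_exp_atBot.comp
      (tendsto_atBot_add_const_left _ T tendsto_neg_atTop_atBot)).mul_const ‖f T‖
  obtain ⟨T', hT'⟩ := eventually_atTop.1 (hdecay.eventually (gt_mem_nhds (half_pos hε)))
  refine ⟨max T T', fun t ht => ?_⟩
  have hbound := norm_le_exp_mul_add_of_hasDerivAt_neg_add (fun u hu => (hT u hu).1)
    (fun u hu => (hT u hu).2) (le_of_max_le_left ht)
  rw [dist_zero_right]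
  linarith [hT' t (le_of_max_le_right ht)]

end LinearDecay

section RingModel

variable {ι : Type*} [Fintype ι]

noncomputable def ringInput (δ : ℝ) (θ V x : ι → ℝ) (i : ι) : ℝ :=
  δ * ∑ j, cos (θ i - θ j) * x j + V i

/-- The paper's `m_y`. -/
noncomputable def sinMoment (θ x : ι → ℝ) : ℝ :=
  ∑ j, sin (θ j) * x j

theorem ringInput_sub_ringInput_of_mirror {δ : ℝ} {θ V : ι → ℝ} (x : ι → ℝ) {i i' : ι}
    (hsin : sin (θ i') = -sin (θ i)) (hcos : cos (θ i') = cos (θ i)) (hV : V i' = V i) :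
    ringInput δ θ V x i - ringInput δ θ V x i' = 2 * δ * sin (θ i) * sinMoment θ x := by
  rw [ringInput, ringInput, hV, add_sub_add_right_eq_sub, ← mul_sub, ← Finset.sum_sub_distrib,
    sinMoment, Finset.mul_sum, Finset.mul_sum]
  refine Finset.sum_congr rfl fun j _ => ?_
  rw [cos_sub, cos_sub, hsin, hcos]
  ring

theorem abs_relu_ringInput_sub_le {δ : ℝ} (hδ : 0 ≤ δ) {θ V : ι → ℝ} (x : ι → ℝ) {i i' : ι}
    (hsin : sin (θ i') = -sin (θ i)) (hcos : cos (θ i') = cos (θ i)) (hV : V i' = V i) :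
    |max (ringInput δ θ V x i) 0 - max (ringInput δ θ V x i') 0|
      ≤ 2 * δ * |sin (θ i)| * |sinMoment θ x| := by
  refine (abs_max_sub_max_le_abs _ _ _).trans_eq ?_
  rw [ringInput_sub_ringInput_of_mirror x hsin hcos hV, abs_mul, abs_mul, abs_mul,
    abs_of_nonneg hδ, abs_two]

/-- Pairing each neuron with its mirror image, only the asymmetric part `2 δ sin θᵢ · m` of the
input survives, and the rectifier is `1`-Lipschitz. -/
theorem abs_sinMoment_relu_ringInput_le {δ : ℝ} (hδ : 0 ≤ δ) {θ V : ι → ℝ}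
    (σ : Equiv.Perm ι)
    (hsin : ∀ i, sin (θ (σ i)) = -sin (θ i)) (hcos : ∀ i, cos (θ (σ i)) = cos (θ i))
    (hV : ∀ i, V (σ i) = V i) (x : ι → ℝ) :
    |sinMoment θ (fun i => max (ringInput δ θ V x i) 0)|
      ≤ δ * (∑ i, sin (θ i) ^ 2) * |sinMoment θ x| := by
  set y := fun i => max (ringInput δ θ V x i) 0
  have htwice : 2 * sinMoment θ y = ∑ i, sin (θ i) * (y i - y (σ i)) := by
    have hreindex : sinMoment θ y = ∑ i, sin (θ (σ i)) * y (σ i) :=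
      (Equiv.sum_comp σ fun i => sin (θ i) * y i).symm
    rw [two_mul]
    nth_rw 2 [hreindex]
    simp only [sinMoment, hsin, ← Finset.sum_add_distrib]
    exact Finset.sum_congr rfl fun i _ => by ring
  have hterm : ∀ i,
      |sin (θ i) * (y i - y (σ i))| ≤ 2 * (δ * sin (θ i) ^ 2 * |sinMoment θ x|) := fun i => by
    rw [abs_mul, ← sq_abs (sin (θ i))]
    nlinarith [abs_relu_ringInput_sub_le hδ x (hsin i) (hcos i) (hV i), abs_nonneg (sin (θ i))]
  have hsum := (Finset.abs_sum_le_sum_abs _ Finset.univ).trans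
    (Finset.sum_le_sum fun i _ => hterm i)
  rw [← htwice, abs_mul, abs_two, ← Finset.mul_sum, ← Finset.sum_mul, ← Finset.mul_sum] at hsum
  linarith

theorem hasDerivAt_sinMoment_of_ring {δ : ℝ} {θ V : ι → ℝ} {r : ι → ℝ → ℝ} {t : ℝ}
    (hr : ∀ i, HasDerivAt (r i) (-r i t + max (ringInput δ θ V (fun j => r j t) i) 0) t) :
    HasDerivAt (fun t => sinMoment θ fun j => r j t)
      (-sinMoment θ (fun j => r j t)
        + sinMoment θ fun i => max (ringInput δ θ V (fun j => r j t) i) 0) t := by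
  have := HasDerivAt.fun_sum fun i (_ : i ∈ Finset.univ) => (hr i).const_mul (sin (θ i))
  refine this.congr_deriv ?_
  simp only [sinMoment, ← Finset.sum_neg_distrib, ← Finset.sum_add_distrib]
  exact Finset.sum_congr rfl fun i _ => by ring

theorem tendsto_ring_sub_mirror {δ : ℝ} (hδ : 0 ≤ δ) {θ V : ι → ℝ} (σ : Equiv.Perm ι)
    (hsin : ∀ i, sin (θ (σ i)) = -sin (θ i)) (hcos : ∀ i, cos (θ (σ i)) = cos (θ i))
    (hV : ∀ i, V (σ i) = V i) (hcoupling : δ * ∑ i, sin (θ i) ^ 2 < 1) {r : ι → ℝ → ℝ}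
    (hr : ∀ i, ∀ t ≥ 0,
      HasDerivAt (r i) (-r i t + max (ringInput δ θ V (fun j => r j t) i) 0) t)
    (i : ι) : Tendsto (fun t => r i t - r (σ i) t) atTop (𝓝 0) := by
  have hm : Tendsto (fun t => sinMoment θ fun j => r j t) atTop (𝓝 0) :=
    tendsto_zero_of_hasDerivAt_neg_add_of_norm_le hcoupling
      (fun t ht => hasDerivAt_sinMoment_of_ring fun i => hr i t ht)
      (fun t _ => abs_sinMoment_relu_ringInput_le hδ σ hsin hcos hV _)
  refine tendsto_zero_of_hasDerivAt_neg_add (g := fun t =>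
    max (ringInput δ θ V (fun j => r j t) i) 0 - max (ringInput δ θ V (fun j => r j t) (σ i)) 0)
    ?_ ?_
  · filter_upwards [eventually_ge_atTop 0] with t ht
    exact ((hr i t ht).sub (hr (σ i) t ht)).congr_deriv (by ring)
  · refine squeeze_zero_norm
      (fun t => abs_relu_ringInput_sub_le hδ _ (hsin i) (hcos i) (hV i)) ?_
    simpa using (tendsto_zero_iff_norm_tendsto_zero.1 hm).const_mul (2 * δ * |sin (θ i)|)

end RingModel

theorem exists_int_two_pi_mul_val_neg_div (N : ℕ) [NeZero N] (i : Fin N) :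
    ∃ k : ℤ, 2 * π * ((-i : Fin N) : ℕ) / N = -(2 * π * i / N) + k * (2 * π) := by
  rw [Fin.val_neg]
  split_ifs with hi
  · exact ⟨0, by simp [hi]⟩
  · refine ⟨1, ?_⟩
    have hN : (N : ℝ) ≠ 0 := NeZero.ne _
    rw [Nat.cast_sub i.isLt.le]
    field_simp
    ring

theorem sin_two_pi_mul_val_neg_div (N : ℕ) [NeZero N] (i : Fin N) :
    sin (2 * π * ((-i : Fin N) : ℕ) / N) = -sin (2 * π * i / N) := by
  obtain ⟨k, hk⟩ := exists_int_two_pi_mul_val_neg_div N i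
  rw [hk, sin_add_int_mul_two_pi, sin_neg]

theorem cos_two_pi_mul_val_neg_div (N : ℕ) [NeZero N] (i : Fin N) :
    cos (2 * π * ((-i : Fin N) : ℕ) / N) = cos (2 * π * i / N) := by
  obtain ⟨k, hk⟩ := exists_int_two_pi_mul_val_neg_div N i
  rw [hk, cos_add_int_mul_two_pi, cos_neg]

/-- Under the same assumptions as for the decay of `m_y`, every solution
of the `N`-dimensional ring system becomes asymptotically symmetric about
the stimulated direction `θ₀ = 0`: for each `j ∈ {1,…,N-1}`,
`r_j(t) - r_{N-j}(t) → 0` as `t → ∞`. -/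
theorem stmt12 (N : ℕ) (hN : 3 ≤ N) (δ : ℝ) (hδ0 : 0 < δ)
    (θ : Fin N → ℝ) (hθ : ∀ i : Fin N, θ i = 2 * π * i / N)
    (hδ : δ * ∑ i ∈ Finset.univ.erase (⟨0, by omega⟩ : Fin N),
      Real.sin (θ i) ^ 2 < 1)
    (V : Fin N → ℝ)
    (hVi : ∀ i : Fin N, i ≠ ⟨0, by omega⟩ → V i = 0)
    (r : Fin N → ℝ → ℝ)
    (hr : ∀ i : Fin N, ∀ t ≥ (0 : ℝ), HasDerivAt (r i)
      (-r i t + max (δ * ∑ j, Real.cos (θ i - θ j) * r j t + V i) 0) t) :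
    ∀ j k : Fin N, j ≠ ⟨0, by omega⟩ → (k : ℕ) = N - (j : ℕ) →
      Tendsto (fun t => r j t - r k t) atTop (nhds 0) := by
  intro j k hj hk
  have : NeZero N := ⟨by omega⟩
  have hj0 : j ≠ 0 := hj
  obtain rfl : k = -j := Fin.ext (by rw [Fin.val_neg, if_neg hj0]; exact hk)
  have hV : ∀ i : Fin N, V (-i) = V i := fun i => by
    by_cases hi : i = 0
    · rw [hi, neg_zero]
    · rw [hVi i hi, hVi (-i) (neg_ne_zero.2 hi)]
  have hcoupling : δ * ∑ i, sin (θ i) ^ 2 < 1 := by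
    rwa [← Finset.sum_erase_add _ _ (Finset.mem_univ 0), hθ 0, Fin.val_zero, Nat.cast_zero,
      mul_zero, zero_div, sin_zero, sq, mul_zero, add_zero]
  exact tendsto_ring_sub_mirror hδ0.le (Equiv.neg (Fin N))
    (fun i => by simp only [Equiv.neg_apply, hθ, sin_two_pi_mul_val_neg_div])
    (fun i => by simp only [Equiv.neg_apply, hθ, cos_two_pi_mul_val_neg_div]) hV hcoupling hr j
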